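/- Fix a natural number L ≥ 2. Define S_GIFSq(N) = (64/(L² − 1)) · ((L²)^{N+1} − L²)/L and S_GIFS(N) = (L² − L²·L^{N})/(L−1)² + (1/(L−1)) · Σ_{i=1}^{N} L^{i+1} · L^{L^{i-1}}. Then S_GIFSq(N) = O(L^{2N}) as N → ∞, and S_GIFSq(N)/S_GIFS(N) → 0 as N → ∞; in particular S_GIFSq(N) is eventually strictly smaller than S_GIFS(N). -/

import Mathlib

open Filter

/-- Total comparison count of the deterministic GIFS algorithm with quadtree search,
bucket capacity `64`. -/
noncomputable def SGIFSq (L N : ℕ) : ℝ :=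
  (64 / ((L : ℝ) ^ 2 - 1)) * ((((L : ℝ) ^ 2) ^ (N + 1) - (L : ℝ) ^ 2) / (L : ℝ))

/-- Total comparison count of the deterministic GIFS algorithm with worst-case linear
search. -/
noncomputable def SGIFS (L N : ℕ) : ℝ :=
  ((L : ℝ) ^ 2 - (L : ℝ) ^ 2 * (L : ℝ) ^ N) / ((L : ℝ) - 1) ^ 2
    + (1 / ((L : ℝ) - 1))
      * ∑ i ∈ Finset.Icc 1 N, (L : ℝ) ^ (i + 1) * (L : ℝ) ^ (L ^ (i - 1))

lemma aux_exp (N : ℕ) (h : 7 ≤ N) : 3 * N + 9 ≤ 2 ^ (N - 1) := by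
  induction N, h using Nat.le_induction with
  | base => norm_num
  | succ n hn ih =>
    obtain ⟨m, rfl⟩ : ∃ m, n = m + 1 := ⟨n - 1, by omega⟩
    have h3 : 3 ≤ 2 ^ m := le_trans (by norm_num) (Nat.pow_le_pow_right (by norm_num) (by omega : 2 ≤ m))
    have h2 : 2 ^ (m + 1) = 2 ^ m + 2 ^ m := by rw [pow_succ]; ring
    simp only [Nat.add_sub_cancel] at ih ⊢
    omega

lemma q_nonneg (L N : ℕ) (hL : 2 ≤ L) : 0 ≤ SGIFSq L N := by
  have hl2 : (2 : ℝ) ≤ (L : ℝ) := by exact_mod_cast hL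
  have h1 : (0 : ℝ) < (L : ℝ) ^ 2 - 1 := by nlinarith
  have h2 : (0 : ℝ) ≤ ((L : ℝ) ^ 2) ^ (N + 1) - (L : ℝ) ^ 2 := by
    have : (L : ℝ) ^ 2 ≤ ((L : ℝ) ^ 2) ^ (N + 1) :=
      le_self_pow₀ (by nlinarith) (by omega)
    linarith
  exact mul_nonneg (div_nonneg (by norm_num) h1.le)
    (div_nonneg h2 (by linarith))

lemma q_le (L N : ℕ) (hL : 2 ≤ L) : SGIFSq L N ≤ (L : ℝ) ^ (2 * N + 7) := by
  have hl2 : (2 : ℝ) ≤ (L : ℝ) := by exact_mod_cast hL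
  have hl0 : (0 : ℝ) < (L : ℝ) := by linarith
  have h1 : (0 : ℝ) < (L : ℝ) ^ 2 - 1 := by nlinarith
  have ha : 64 / ((L : ℝ) ^ 2 - 1) ≤ (L : ℝ) ^ 6 := by
    rw [div_le_iff₀ h1]
    have h6 : (2 : ℝ) ^ 6 ≤ (L : ℝ) ^ 6 := pow_le_pow_left₀ (by norm_num) hl2 6
    nlinarith
  have hb0 : (0 : ℝ) ≤ (((L : ℝ) ^ 2) ^ (N + 1) - (L : ℝ) ^ 2) / (L : ℝ) := by
    have : (L : ℝ) ^ 2 ≤ ((L : ℝ) ^ 2) ^ (N + 1) :=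
      le_self_pow₀ (by nlinarith) (by omega)
    exact div_nonneg (by linarith) hl0.le
  have hb : (((L : ℝ) ^ 2) ^ (N + 1) - (L : ℝ) ^ 2) / (L : ℝ) ≤ (L : ℝ) ^ (2 * N + 1) := by
    have hx : ((L : ℝ) ^ 2) ^ (N + 1) = (L : ℝ) ^ (2 * N + 1) * (L : ℝ) := by
      rw [← pow_mul, ← pow_succ]; ring_nf
    rw [div_le_iff₀ hl0, hx]
    nlinarith [sq_nonneg (L : ℝ)]
  calc SGIFSq L N ≤ (L : ℝ) ^ 6 * (L : ℝ) ^ (2 * N + 1) :=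
        mul_le_mul ha hb hb0 (by positivity)
    _ = (L : ℝ) ^ (2 * N + 7) := by rw [← pow_add]; ring_nf

lemma s_lower (L N : ℕ) (hL : 2 ≤ L) (h7 : 7 ≤ N) :
    (L : ℝ) ^ (4 * N + 8) ≤ SGIFS L N := by
  have hl2 : (2 : ℝ) ≤ (L : ℝ) := by exact_mod_cast hL
  have hl0 : (0 : ℝ) < (L : ℝ) := by linarith
  have hl1 : (1 : ℝ) < (L : ℝ) := by linarith
  -- bound on the first term
  have hnum0 : (0 : ℝ) ≤ (L : ℝ) ^ 2 * (L : ℝ) ^ N - (L : ℝ) ^ 2 := by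
    have : (1 : ℝ) ≤ (L : ℝ) ^ N := one_le_pow₀ hl1.le
    nlinarith
  have hden : (1 : ℝ) ≤ ((L : ℝ) - 1) ^ 2 := by nlinarith
  have hnum : (L : ℝ) ^ 2 * (L : ℝ) ^ N - (L : ℝ) ^ 2 ≤ (L : ℝ) ^ (N + 2) := by
    have hx : (L : ℝ) ^ (N + 2) = (L : ℝ) ^ 2 * (L : ℝ) ^ N := by
      rw [pow_add]; ring
    nlinarith [sq_nonneg (L : ℝ)]
  have hT1 : -((L : ℝ) ^ (N + 2)) ≤
      ((L : ℝ) ^ 2 - (L : ℝ) ^ 2 * (L : ℝ) ^ N) / ((L : ℝ) - 1) ^ 2 := by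
    have hd := div_le_self hnum0 hden
    have heq : ((L : ℝ) ^ 2 - (L : ℝ) ^ 2 * (L : ℝ) ^ N) / ((L : ℝ) - 1) ^ 2 =
        -(((L : ℝ) ^ 2 * (L : ℝ) ^ N - (L : ℝ) ^ 2) / ((L : ℝ) - 1) ^ 2) := by
      rw [← neg_div]; ring_nf
    rw [heq]
    linarith
  -- bound on the second term
  have hterm : (L : ℝ) ^ (N + 1) * (L : ℝ) ^ (L ^ (N - 1)) ≤
      ∑ i ∈ Finset.Icc 1 N, (L : ℝ) ^ (i + 1) * (L : ℝ) ^ (L ^ (i - 1)) := by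
    apply Finset.single_le_sum (f := fun i => (L : ℝ) ^ (i + 1) * (L : ℝ) ^ (L ^ (i - 1)))
    · intro i _; positivity
    · exact Finset.mem_Icc.mpr ⟨by omega, le_refl N⟩
  have hsum0 : (0 : ℝ) ≤ ∑ i ∈ Finset.Icc 1 N, (L : ℝ) ^ (i + 1) * (L : ℝ) ^ (L ^ (i - 1)) :=
    Finset.sum_nonneg fun i _ => by positivity
  have hfrac : (1 : ℝ) / (L : ℝ) ≤ 1 / ((L : ℝ) - 1) :=
    one_div_le_one_div_of_le (by linarith) (by linarith)
  have hT2 : (L : ℝ) ^ (N + L ^ (N - 1)) ≤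
      (1 / ((L : ℝ) - 1)) *
        ∑ i ∈ Finset.Icc 1 N, (L : ℝ) ^ (i + 1) * (L : ℝ) ^ (L ^ (i - 1)) := by
    have h1 : (1 / (L : ℝ)) * ((L : ℝ) ^ (N + 1) * (L : ℝ) ^ (L ^ (N - 1))) ≤
        (1 / ((L : ℝ) - 1)) *
          ∑ i ∈ Finset.Icc 1 N, (L : ℝ) ^ (i + 1) * (L : ℝ) ^ (L ^ (i - 1)) :=
      mul_le_mul hfrac hterm (by positivity) (div_nonneg zero_le_one (by linarith))
    have h2 : (1 / (L : ℝ)) * ((L : ℝ) ^ (N + 1) * (L : ℝ) ^ (L ^ (N - 1))) =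
        (L : ℝ) ^ (N + L ^ (N - 1)) := by
      rw [pow_add, pow_succ]
      field_simp
      ring
    linarith [h1, h2.ge, h2.le]
  -- exponent comparison
  have hE : 4 * N + 9 ≤ N + L ^ (N - 1) := by
    have h1 := aux_exp N h7
    have h2 : 2 ^ (N - 1) ≤ L ^ (N - 1) := Nat.pow_le_pow_left hL (N - 1)
    omega
  have hb1 : (L : ℝ) ^ (4 * N + 9) ≤ (L : ℝ) ^ (N + L ^ (N - 1)) :=
    pow_le_pow_right₀ hl1.le hE
  have hb2 : (L : ℝ) ^ (N + 2) ≤ (L : ℝ) ^ (4 * N + 8) :=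
    pow_le_pow_right₀ hl1.le (by omega)
  have hb3 : (L : ℝ) ^ (4 * N + 8) ≤ (L : ℝ) ^ (4 * N + 9) - (L : ℝ) ^ (4 * N + 8) := by
    have hx : (L : ℝ) ^ (4 * N + 9) = (L : ℝ) ^ (4 * N + 8) * (L : ℝ) := pow_succ _ _
    nlinarith [pow_nonneg hl0.le (4 * N + 8)]
  unfold SGIFS
  linarith

/-- `S_GIFSq(N) = O(L^{2N})`; moreover `S_GIFSq(N)/S_GIFS(N) → 0`, so `S_GIFSq` is
eventually strictly smaller than `S_GIFS`. -/
theorem SGIFSq_bigO_and_lt_SGIFS (L : ℕ) (hL : 2 ≤ L) :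
    (fun N : ℕ => SGIFSq L N) =O[atTop] (fun N : ℕ => (L : ℝ) ^ (2 * N)) ∧
    Tendsto (fun N : ℕ => SGIFSq L N / SGIFS L N) atTop (nhds 0) ∧
    ∀ᶠ N : ℕ in atTop, SGIFSq L N < SGIFS L N := by
  have hl2 : (2 : ℝ) ≤ (L : ℝ) := by exact_mod_cast hL
  have hl0 : (0 : ℝ) < (L : ℝ) := by linarith
  have hl1 : (1 : ℝ) < (L : ℝ) := by linarith
  refine ⟨?_, ?_, ?_⟩
  · rw [Asymptotics.isBigO_iff]
    refine ⟨(L : ℝ) ^ 7, Eventually.of_forall fun N => ?_⟩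
    rw [Real.norm_eq_abs, Real.norm_eq_abs, abs_of_nonneg (q_nonneg L N hL),
      abs_of_nonneg (by positivity)]
    calc SGIFSq L N ≤ (L : ℝ) ^ (2 * N + 7) := q_le L N hL
      _ = (L : ℝ) ^ 7 * (L : ℝ) ^ (2 * N) := by rw [← pow_add]; ring_nf
  · apply tendsto_of_tendsto_of_tendsto_of_le_of_le'
      (tendsto_const_nhds (x := (0 : ℝ)))
      (tendsto_pow_atTop_nhds_zero_of_lt_one (r := (1/2 : ℝ)) (by norm_num) (by norm_num))
    · filter_upwards [eventually_ge_atTop 7] with N h7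
      have hS : (0 : ℝ) < SGIFS L N :=
        lt_of_lt_of_le (by positivity) (s_lower L N hL h7)
      exact div_nonneg (q_nonneg L N hL) hS.le
    · filter_upwards [eventually_ge_atTop 7] with N h7
      have hS := s_lower L N hL h7
      have hQ := q_le L N hL
      have step1 : SGIFSq L N / SGIFS L N ≤ (L : ℝ) ^ (2 * N + 7) / (L : ℝ) ^ (4 * N + 8) :=
        div_le_div₀ (by positivity) hQ (by positivity) hS
      have step2 : (L : ℝ) ^ (2 * N + 7) / (L : ℝ) ^ (4 * N + 8) = 1 / (L : ℝ) ^ (2 * N + 1) := by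
        rw [div_eq_div_iff (by positivity) (by positivity), one_mul, ← pow_add]
        congr 1
        ring
      have step3 : (1 : ℝ) / (L : ℝ) ^ (2 * N + 1) ≤ (1 / 2 : ℝ) ^ N := by
        have h1 : (2 : ℝ) ^ N ≤ (2 : ℝ) ^ (2 * N + 1) :=
          pow_le_pow_right₀ (by norm_num) (by omega)
        have h2 : (2 : ℝ) ^ (2 * N + 1) ≤ (L : ℝ) ^ (2 * N + 1) :=
          pow_le_pow_left₀ (by norm_num) hl2 _
        rw [div_pow, one_pow]
        exact one_div_le_one_div_of_le (by positivity) (le_trans h1 h2)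
      calc SGIFSq L N / SGIFS L N ≤ (L : ℝ) ^ (2 * N + 7) / (L : ℝ) ^ (4 * N + 8) := step1
        _ = 1 / (L : ℝ) ^ (2 * N + 1) := step2
        _ ≤ (1 / 2 : ℝ) ^ N := step3
  · filter_upwards [eventually_ge_atTop 7] with N h7
    calc SGIFSq L N ≤ (L : ℝ) ^ (2 * N + 7) := q_le L N hL
      _ < (L : ℝ) ^ (4 * N + 8) := pow_lt_pow_right₀ hl1 (by omega)
      _ ≤ SGIFS L N := s_lower L N hL h7
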